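/- arXiv:1307.4145 — 3 statements merged into one kernel-verified Lean document; each statement's English description precedes it below -/
import Mathlib

section
/- Let λ_max ≥ λ₀ > λ > 0 and suppose θ*_λ ≠ θ*_{λ₀}. Then the strict inequality ‖θ*_λ − θ*_{λ₀}‖₂² < (m/2)·[ g((λ/λ₀)·θ*_{λ₀}) − g(θ*_{λ₀}) + (1 − λ/λ₀)·⟨∇g(θ*_{λ₀}), θ*_{λ₀}⟩ ] holds, where ∇g(θ) is the gradient of g, given componentwise by [∇g(θ)]_i = (1/m) log(θ_i/(1 − θ_i)). -/
/-
Write `r = λ/λ₀`. The point `r θ*_{λ₀}` lies in `F_λ`, so `g(θ*_λ) ≤ g(r θ*_{λ₀})`. The point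
`θ*_λ / r` satisfies the linear constraints of `F_{λ₀}`, hence `θ*_λ / r - θ*_{λ₀}` is a feasible
direction of `F_{λ₀}` at `θ*_{λ₀}` and first-order optimality gives
`⟨∇g(θ*_{λ₀}), θ*_λ / r - θ*_{λ₀}⟩ ≥ 0`. Finally `g` is strictly strongly convex with modulus
`4/m`: `g(θ') - g(θ) - ⟨∇g(θ), θ' - θ⟩ > (2/m) ‖θ' - θ‖²` for `θ' ≠ θ`. Coordinatewise this is the
strict binary Pinsker inequality, i.e. strict concavity of `H(u) + 2u²` for the binary entropy `H`.
Splitting `θ*_λ - θ*_{λ₀} = r (θ*_λ / r - θ*_{λ₀}) + (r - 1) θ*_{λ₀}` and combining the three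
facts gives the bound.
-/

/-- The dual objective `g(θ) = (1/m) Σ_i [θ_i log θ_i + (1−θ_i) log(1−θ_i)]`. -/
noncomputable def g (m : ℕ) (θ : Fin m → ℝ) : ℝ :=
  (1 / (m : ℝ)) * ∑ i, (θ i * Real.log (θ i) + (1 - θ i) * Real.log (1 - θ i))

/-- The gradient of `g`, componentwise `(1/m) log(θ_i/(1−θ_i))`. -/
noncomputable def gradg (m : ℕ) (θ : Fin m → ℝ) : Fin m → ℝ :=
  fun i => (1 / (m : ℝ)) * Real.log (θ i / (1 - θ i))
/-- The dual feasible set `F_λ`: componentwise in `(0,1)`, `|⟨θ, x̄^j⟩| ≤ mλ` for all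
columns `x̄^j = X j`, and `⟨θ, b⟩ = 0`. -/
def Feas (m p : ℕ) (X : Fin p → Fin m → ℝ) (b : Fin m → ℝ) (lam : ℝ) :
    Set (Fin m → ℝ) :=
  {θ | (∀ i, 0 < θ i ∧ θ i < 1) ∧ (∀ j, |∑ i, θ i * X j i| ≤ (m : ℝ) * lam) ∧
    ∑ i, θ i * b i = 0}
open scoped Classical in
/-- `m⁺ = #{i : b_i = 1}`. -/
noncomputable def mPlus (m : ℕ) (b : Fin m → ℝ) : ℕ :=
  (Finset.univ.filter (fun i => b i = 1)).card

open scoped Classical in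
/-- `m⁻ = #{i : b_i = −1}`. -/
noncomputable def mMinus (m : ℕ) (b : Fin m → ℝ) : ℕ :=
  (Finset.univ.filter (fun i => b i = -1)).card

open scoped Classical in
/-- `θ_max`, with `(θ_max)_i = m⁻/m` if `b_i = 1` and `m⁺/m` if `b_i = −1`. -/
noncomputable def thetaMax (m : ℕ) (b : Fin m → ℝ) : Fin m → ℝ :=
  fun i => if b i = 1 then (mMinus m b : ℝ) / m else (mPlus m b : ℝ) / m

/-- `λ_max = (1/m) max_j |⟨θ_max, x̄^j⟩|`. -/
noncomputable def lamMax (m p : ℕ) (X : Fin p → Fin m → ℝ) (b : Fin m → ℝ) : ℝ :=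
  (1 / (m : ℝ)) * ⨆ j : Fin p, |∑ i, thetaMax m b i * X j i|



open Real Set Filter Topology

lemma hasDerivAt_log_one_sub_sub_log_add_four_mul {u : ℝ} (hu : u ∈ Ioo (0 : ℝ) 1) :
    HasDerivAt (fun u => log (1 - u) - log u + 4 * u)
      (-((1 - 2 * u) ^ 2 / (u * (1 - u)))) u := by
  have h1 : (1 - u) ≠ 0 := by linarith [hu.2]
  have h0 : u ≠ 0 := hu.1.ne'
  refine ((((hasDerivAt_id' u).const_sub 1).log h1).sub (hasDerivAt_log h0)).add
    ((hasDerivAt_id' u).const_mul 4) |>.congr_deriv ?_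
  field_simp
  ring

lemma strictAntiOn_log_one_sub_sub_log_add_four_mul :
    StrictAntiOn (fun u => log (1 - u) - log u + 4 * u) (Ioo 0 1) := by
  have hderiv : ∀ u ∈ Ioo (0 : ℝ) 1, u ≠ 2⁻¹ →
      deriv (fun u => log (1 - u) - log u + 4 * u) u < 0 := by
    intro u hu hu2
    rw [(hasDerivAt_log_one_sub_sub_log_add_four_mul hu).deriv, neg_lt_zero]
    have : 1 - 2 * u ≠ 0 := fun h => hu2 (by linarith)
    exact div_pos (by positivity) (mul_pos hu.1 (by linarith [hu.2]))
  have hcont : ContinuousOn (fun u => log (1 - u) - log u + 4 * u) (Ioo 0 1) :=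
    fun u hu => (hasDerivAt_log_one_sub_sub_log_add_four_mul hu).continuousAt.continuousWithinAt
  -- The derivative vanishes at `1/2`, so the two halves are handled separately and glued.
  have hleft : StrictAntiOn (fun u => log (1 - u) - log u + 4 * u) (Ioc 0 2⁻¹) :=
    strictAntiOn_of_deriv_neg (convex_Ioc _ _)
      (hcont.mono fun u hu => ⟨hu.1, hu.2.trans_lt (by norm_num)⟩)
      fun u hu => by
        rw [interior_Ioc] at hu
        exact hderiv u ⟨hu.1, hu.2.trans (by norm_num)⟩ hu.2.ne
  have hright : StrictAntiOn (fun u => log (1 - u) - log u + 4 * u) (Ico 2⁻¹ 1) :=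
    strictAntiOn_of_deriv_neg (convex_Ico _ _)
      (hcont.mono fun u hu => ⟨(by norm_num : (0:ℝ) < 2⁻¹).trans_le hu.1, hu.2⟩)
      fun u hu => by
        rw [interior_Ico] at hu
        exact hderiv u ⟨(by norm_num : (0:ℝ) < 2⁻¹).trans hu.1, hu.2⟩ hu.1.ne'
  rw [← Ioc_union_Ico_eq_Ioo (by norm_num : (0:ℝ) < 2⁻¹) (by norm_num : (2⁻¹:ℝ) < 1)]
  exact hleft.union hright (isGreatest_Ioc (by norm_num)) (isLeast_Ico (by norm_num))

lemma hasDerivAt_binEntropy_add_two_mul_sq {u : ℝ} (hu : u ∈ Ioo (0 : ℝ) 1) :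
    HasDerivAt (fun u => binEntropy u + 2 * u ^ 2) (log (1 - u) - log u + 4 * u) u := by
  refine (hasDerivAt_binEntropy hu.1.ne' (by linarith [hu.2])).add
    (((hasDerivAt_id' u).pow 2).const_mul 2) |>.congr_deriv ?_
  ring

lemma strictConcaveOn_binEntropy_add_two_mul_sq :
    StrictConcaveOn ℝ (Ioo 0 1) (fun u => binEntropy u + 2 * u ^ 2) := by
  refine StrictAntiOn.strictConcaveOn_of_deriv (convex_Ioo 0 1) (by fun_prop) ?_
  rw [interior_Ioo]
  refine strictAntiOn_log_one_sub_sub_log_add_four_mul.congr fun u hu =>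
    (hasDerivAt_binEntropy_add_two_mul_sq hu).deriv.symm

lemma StrictConcaveOn.lt_add_mul_sub {S : Set ℝ} {f : ℝ → ℝ} {x y f' : ℝ}
    (hf : StrictConcaveOn ℝ S f) (hx : x ∈ S) (hy : y ∈ S) (hxy : x ≠ y)
    (hf' : HasDerivAt f f' x) : f y < f x + f' * (y - x) := by
  rcases hxy.lt_or_gt with hlt | hlt
  · have := hf.slope_lt_of_hasDerivAt hx hy hlt hf'
    rw [slope_def_field, div_lt_iff₀ (sub_pos.2 hlt)] at this
    linarith
  · have := hf.lt_slope_of_hasDerivAt hy hx hlt hf'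
    rw [slope_def_field, lt_div_iff₀ (sub_pos.2 hlt)] at this
    linarith

lemma binEntropy_add_two_mul_sq_sub_lt {s t : ℝ} (hs : s ∈ Ioo (0 : ℝ) 1) (ht : t ∈ Ioo (0 : ℝ) 1)
    (hst : s ≠ t) :
    binEntropy s + 2 * (s - t) ^ 2 < binEntropy t + (log (1 - t) - log t) * (s - t) := by
  have := strictConcaveOn_binEntropy_add_two_mul_sq.lt_add_mul_sub ht hs hst.symm
    (hasDerivAt_binEntropy_add_two_mul_sq ht)
  linarith

lemma g_eq_sum_neg_binEntropy (m : ℕ) (θ : Fin m → ℝ) :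
    g m θ = ∑ i, (1 / (m : ℝ)) * -binEntropy (θ i) := by
  simp only [g, binEntropy, log_inv, Finset.mul_sum]
  congr! 1 with i
  ring

lemma gradg_eq_neg_deriv_binEntropy {m : ℕ} {θ : Fin m → ℝ} {i : Fin m} (hθ : θ i ∈ Ioo 0 1) :
    gradg m θ i = (1 / (m : ℝ)) * -(log (1 - θ i) - log (θ i)) := by
  rw [gradg, log_div hθ.1.ne' (by linarith [hθ.2])]
  ring

lemma hasFDerivAt_g {m : ℕ} {θ : Fin m → ℝ} (hθ : ∀ i, θ i ∈ Ioo 0 1) :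
    HasFDerivAt (g m)
      (∑ i, gradg m θ i • ContinuousLinearMap.proj (R := ℝ) (φ := fun _ : Fin m => ℝ) i) θ := by
  rw [funext (g_eq_sum_neg_binEntropy m)]
  refine HasFDerivAt.fun_sum fun i _ => ?_
  rw [gradg_eq_neg_deriv_binEntropy (hθ i)]
  have hd : HasDerivAt (fun u => (1 / (m : ℝ)) * -binEntropy u)
      ((1 / (m : ℝ)) * -(log (1 - θ i) - log (θ i))) (θ i) :=
    ((hasDerivAt_binEntropy (hθ i).1.ne' (by linarith [(hθ i).2])).neg.const_mul _)
  exact hd.comp_hasFDerivAt (f := fun θ : Fin m → ℝ => θ i) θ (hasFDerivAt_apply i θ)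

lemma natCast_mul_g_sub_sub_dotProduct_eq_sum {m : ℕ} {θ θ' : Fin m → ℝ} (hm : m ≠ 0)
    (hθ : ∀ i, θ i ∈ Ioo 0 1) :
    m * (g m θ' - g m θ - gradg m θ ⬝ᵥ (θ' - θ)) =
      ∑ i, (binEntropy (θ i) + (log (1 - θ i) - log (θ i)) * (θ' i - θ i) - binEntropy (θ' i)) := by
  simp only [g_eq_sum_neg_binEntropy, dotProduct, gradg_eq_neg_deriv_binEntropy (hθ _),
    ← Finset.sum_sub_distrib, Finset.mul_sum, Pi.sub_apply]
  congr! 1 with i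
  field_simp
  ring

lemma two_mul_sum_sq_sub_lt_natCast_mul_g_sub_sub_dotProduct {m : ℕ} {θ θ' : Fin m → ℝ}
    (hθ : ∀ i, θ i ∈ Ioo 0 1) (hθ' : ∀ i, θ' i ∈ Ioo 0 1) (hne : θ' ≠ θ) :
    2 * ∑ i, (θ' i - θ i) ^ 2 < m * (g m θ' - g m θ - gradg m θ ⬝ᵥ (θ' - θ)) := by
  obtain ⟨k, hk⟩ := Function.ne_iff.1 hne
  rw [natCast_mul_g_sub_sub_dotProduct_eq_sum k.pos.ne' hθ, Finset.mul_sum]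
  refine Finset.sum_lt_sum (fun i _ => ?_) ⟨k, Finset.mem_univ k, ?_⟩
  · rcases eq_or_ne (θ' i) (θ i) with h | h
    · simp [h]
    · linarith [binEntropy_add_two_mul_sq_sub_lt (hθ' i) (hθ i) h]
  · linarith [binEntropy_add_two_mul_sq_sub_lt (hθ' k) (hθ k) hk]

lemma gradg_dotProduct_nonneg_of_isMinOn {m : ℕ} {θ d : Fin m → ℝ} {s : Set (Fin m → ℝ)}
    (hθ : ∀ i, θ i ∈ Ioo 0 1) (hmin : IsMinOn (g m) s θ) (hd : d ∈ posTangentConeAt s θ) :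
    0 ≤ gradg m θ ⬝ᵥ d := by
  simpa [dotProduct] using
    hmin.localize.hasFDerivWithinAt_nonneg (hasFDerivAt_g hθ).hasFDerivWithinAt hd

section Feasibility

variable {m p : ℕ} {X : Fin p → Fin m → ℝ} {b : Fin m → ℝ}

lemma mem_Feas_iff {lam : ℝ} {θ : Fin m → ℝ} :
    θ ∈ Feas m p X b lam ↔
      (∀ i, θ i ∈ Ioo 0 1) ∧ (∀ j, |θ ⬝ᵥ X j| ≤ m * lam) ∧ θ ⬝ᵥ b = 0 :=
  Iff.rfl

lemma smul_mem_Feas {lam c : ℝ} {θ : Fin m → ℝ} (hθ : θ ∈ Feas m p X b lam) (hc₀ : 0 < c)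
    (hc₁ : c ≤ 1) :
    c • θ ∈ Feas m p X b (c * lam) := by
  obtain ⟨hbox, hX, hb⟩ := mem_Feas_iff.1 hθ
  refine mem_Feas_iff.2 ⟨fun i => ?_, fun j => ?_, by rw [smul_dotProduct, hb, smul_zero]⟩
  · obtain ⟨hθi₀, hθi₁⟩ := hbox i
    exact ⟨mul_pos hc₀ hθi₀, by simp only [Pi.smul_apply, smul_eq_mul]; nlinarith⟩
  · rw [smul_dotProduct, smul_eq_mul, abs_mul, abs_of_pos hc₀]
    nlinarith [hX j]

lemma smul_sub_mem_posTangentConeAt_Feas {lam c : ℝ} {θ θ₀ : Fin m → ℝ} (hc : 0 < c)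
    (hθ : θ ∈ Feas m p X b lam) (hθ₀ : θ₀ ∈ Feas m p X b (c * lam)) :
    c • θ - θ₀ ∈ posTangentConeAt (Feas m p X b (c * lam)) θ₀ := by
  obtain ⟨-, hX, hb⟩ := mem_Feas_iff.1 hθ
  obtain ⟨hbox₀, hX₀, hb₀⟩ := mem_Feas_iff.1 hθ₀
  refine mem_posTangentConeAt_of_frequently_mem (Eventually.frequently ?_)
  have hbox : ∀ᶠ t : ℝ in 𝓝 0, θ₀ + t • (c • θ - θ₀) ∈ Set.pi univ fun _ => Ioo 0 1 := by
    refine (Continuous.tendsto (by fun_prop) 0).eventually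
      ((isOpen_set_pi finite_univ fun _ _ => isOpen_Ioo).mem_nhds ?_)
    simpa using hbox₀
  filter_upwards [nhdsWithin_le_nhds hbox, Ioo_mem_nhdsGT (zero_lt_one' ℝ)] with t hbox ht
  have hcomb : θ₀ + t • (c • θ - θ₀) = (1 - t) • θ₀ + (t * c) • θ := by module
  refine mem_Feas_iff.2 ⟨fun i => hbox i (mem_univ i), fun j => ?_, ?_⟩
  · rw [hcomb, add_dotProduct, smul_dotProduct, smul_dotProduct, smul_eq_mul, smul_eq_mul]
    have htc : 0 < t * c := mul_pos ht.1 hc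
    calc |(1 - t) * (θ₀ ⬝ᵥ X j) + t * c * (θ ⬝ᵥ X j)|
        ≤ (1 - t) * |θ₀ ⬝ᵥ X j| + t * c * |θ ⬝ᵥ X j| := by
          refine (abs_add_le _ _).trans_eq ?_
          rw [abs_mul, abs_mul, abs_of_pos (sub_pos.2 ht.2), abs_of_pos htc]
      _ ≤ (1 - t) * (m * (c * lam)) + t * c * (m * lam) := by
          gcongr
          · exact (sub_pos.2 ht.2).le
          · exact hX₀ j
          · exact hX j
      _ = m * (c * lam) := by ring
  · rw [hcomb, add_dotProduct, smul_dotProduct, smul_dotProduct, hb, hb₀, smul_zero, smul_zero,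
      add_zero]

end Feasibility

theorem slores_ball_bound_strict_general (m p : ℕ)
    (X : Fin p → Fin m → ℝ) (b : Fin m → ℝ)
    (lam lam₀ : ℝ) (hlam : 0 < lam) (hll : lam < lam₀)
    (θs θ₀ : Fin m → ℝ)
    (hθs : θs ∈ Feas m p X b lam ∧ ∀ θ ∈ Feas m p X b lam, g m θs ≤ g m θ)
    (hθ₀ : θ₀ ∈ Feas m p X b lam₀ ∧ ∀ θ ∈ Feas m p X b lam₀, g m θ₀ ≤ g m θ)
    (hne : θs ≠ θ₀) :
    ∑ i, (θs i - θ₀ i) ^ 2 < ((m : ℝ) / 2) *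
      (g m (fun i => (lam / lam₀) * θ₀ i) - g m θ₀
        + (1 - lam / lam₀) * ∑ i, gradg m θ₀ i * θ₀ i) := by
  have hlam₀ : 0 < lam₀ := hlam.trans hll
  set r := lam / lam₀
  have hr₀ : 0 < r := div_pos hlam hlam₀
  have hr₁ : r < 1 := (div_lt_one hlam₀).2 hll
  have hscaled : g m θs ≤ g m (fun i => r * θ₀ i) := by
    have hmem := smul_mem_Feas hθ₀.1 hr₀ hr₁.le
    rw [div_mul_cancel₀ _ hlam₀.ne'] at hmem
    exact hθs.2 _ hmem
  have hvar : 0 ≤ gradg m θ₀ ⬝ᵥ (r⁻¹ • θs - θ₀) := by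
    rw [show lam₀ = r⁻¹ * lam by rw [inv_div, div_mul_cancel₀ _ hlam.ne']] at hθ₀
    exact gradg_dotProduct_nonneg_of_isMinOn hθ₀.1.1 (isMinOn_iff.2 hθ₀.2)
      (smul_sub_mem_posTangentConeAt_Feas (inv_pos.2 hr₀) hθs.1 hθ₀.1)
  have hconv := two_mul_sum_sq_sub_lt_natCast_mul_g_sub_sub_dotProduct hθ₀.1.1 hθs.1.1 hne
  have hsplit : θs - θ₀ = r • (r⁻¹ • θs - θ₀) + (r - 1) • θ₀ := by
    rw [smul_sub, smul_smul, mul_inv_cancel₀ hr₀.ne', one_smul]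
    module
  rw [hsplit, dotProduct_add, dotProduct_smul, dotProduct_smul, smul_eq_mul, smul_eq_mul]
    at hconv
  change _ < _ * (_ - _ + _ * (gradg m θ₀ ⬝ᵥ θ₀))
  linarith [mul_le_mul_of_nonneg_left hscaled m.cast_nonneg,
    mul_nonneg (mul_nonneg m.cast_nonneg hr₀.le) hvar]

/-- Theorem 2(b): for `λ_max ≥ λ₀ > λ > 0` with `θ*_λ ≠ θ*_{λ₀}`, the strict inequality
`‖θ*_λ − θ*_{λ₀}‖₂² < (m/2)[g((λ/λ₀)θ*_{λ₀}) − g(θ*_{λ₀}) + (1 − λ/λ₀)⟨∇g(θ*_{λ₀}), θ*_{λ₀}⟩]`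
holds. -/
theorem slores_ball_bound_strict (m p : ℕ) (hm : 1 ≤ m) (hp : 1 ≤ p)
    (X : Fin p → Fin m → ℝ) (b : Fin m → ℝ) (hb : ∀ i, b i = 1 ∨ b i = -1)
    (hmp : 1 ≤ mPlus m b) (hmm : 1 ≤ mMinus m b) (hlmax : 0 < lamMax m p X b)
    (lam lam₀ : ℝ) (hlam : 0 < lam) (hll : lam < lam₀) (hle : lam₀ ≤ lamMax m p X b)
    (θs θ₀ : Fin m → ℝ)
    (hθs : θs ∈ Feas m p X b lam ∧ ∀ θ ∈ Feas m p X b lam, g m θs ≤ g m θ)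
    (hθ₀ : θ₀ ∈ Feas m p X b lam₀ ∧ ∀ θ ∈ Feas m p X b lam₀, g m θ₀ ≤ g m θ)
    (hne : θs ≠ θ₀) :
    ∑ i, (θs i - θ₀ i) ^ 2 < ((m : ℝ) / 2) *
      (g m (fun i => (lam / lam₀) * θ₀ i) - g m θ₀
        + (1 - lam / lam₀) * ∑ i, gradg m θ₀ i * θ₀ i) :=
  slores_ball_bound_strict_general m p X b lam lam₀ hlam hll θs θ₀ hθs hθ₀ hne
end

section
/- For every λ ∈ (0, λ_max], the active set I_λ = {j ∈ {1,…,p} : |⟨θ*_λ, x̄^j⟩| = mλ} is nonempty. -/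
/-! If no constraint `|⟨θ, x̄^j⟩| ≤ mλ` is active at `θ*_λ`, then `θ*_λ` is a local minimizer of
the convex function `g` on `C ∩ {⟨θ, b⟩ = 0}`, hence a global one there. But the gradient of `g`
at `θ_max` is a multiple of `b`, so by Gibbs' inequality `θ_max` is the unique minimizer of `g`
on that set. Thus `θ*_λ = θ_max`, and a column `j` attaining `λ_max` has
`|⟨θ*_λ, x̄^j⟩| = mλ_max ≥ mλ`, a contradiction. -/

open Real Finset Filter Topology

lemma mul_log_le_mul_log_add_sub {a x : ℝ} (ha : 0 < a) (hx : 0 < x) :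
    x * log a ≤ x * log x + (a - x) := by
  have h := log_le_sub_one_of_pos (div_pos ha hx)
  rw [log_div ha.ne' hx.ne'] at h
  have h' := mul_le_mul_of_nonneg_left h hx.le
  have hx_div : x * (a / x - 1) = a - x := by field_simp
  linarith

lemma mul_log_lt_mul_log_add_sub {a x : ℝ} (ha : 0 < a) (hx : 0 < x) (hax : a ≠ x) :
    x * log a < x * log x + (a - x) := by
  have h := log_lt_sub_one_of_pos (div_pos ha hx) (by rwa [Ne, div_eq_one_iff_eq hx.ne'])
  rw [log_div ha.ne' hx.ne'] at h
  have h' := mul_lt_mul_of_pos_left h hx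
  have hx_div : x * (a / x - 1) = a - x := by field_simp
  linarith

/-- Gibbs' inequality for two Bernoulli distributions: the left side is the tangent line of
`x ↦ x log x + (1 - x) log (1 - x)` at `a`, evaluated at `x`. -/
lemma mul_log_add_one_sub_mul_log_le {a x : ℝ} (ha₀ : 0 < a) (ha₁ : a < 1) (hx₀ : 0 < x)
    (hx₁ : x < 1) :
    x * log a + (1 - x) * log (1 - a) ≤ x * log x + (1 - x) * log (1 - x) := by
  linarith [mul_log_le_mul_log_add_sub ha₀ hx₀,
    mul_log_le_mul_log_add_sub (sub_pos.2 ha₁) (sub_pos.2 hx₁)]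

lemma mul_log_add_one_sub_mul_log_lt {a x : ℝ} (ha₀ : 0 < a) (ha₁ : a < 1) (hx₀ : 0 < x)
    (hx₁ : x < 1) (hax : a ≠ x) :
    x * log a + (1 - x) * log (1 - a) < x * log x + (1 - x) * log (1 - x) := by
  linarith [mul_log_lt_mul_log_add_sub ha₀ hx₀ hax,
    mul_log_le_mul_log_add_sub (sub_pos.2 ha₁) (sub_pos.2 hx₁)]

lemma convexOn_mul_log_add_one_sub_mul_log :
    ConvexOn ℝ (Set.Icc 0 1) fun t : ℝ => t * log t + (1 - t) * log (1 - t) := by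
  have h : (fun t : ℝ => t * log t + (1 - t) * log (1 - t)) = -binEntropy := by
    ext t
    simp only [Pi.neg_apply, binEntropy, log_inv]
    ring
  rw [h]
  exact strictConcave_binEntropy.concaveOn.neg

def relaxedFeas (m : ℕ) (b : Fin m → ℝ) : Set (Fin m → ℝ) :=
  {θ | (∀ i, 0 < θ i ∧ θ i < 1) ∧ ∑ i, θ i * b i = 0}

lemma convex_relaxedFeas (m : ℕ) (b : Fin m → ℝ) : Convex ℝ (relaxedFeas m b) := by
  intro x hx y hy s t hs ht hst
  refine ⟨fun i => ?_, ?_⟩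
  · exact convex_Ioo (0 : ℝ) 1 (hx.1 i) (hy.1 i) hs ht hst
  · simp only [Pi.add_apply, Pi.smul_apply, smul_eq_mul, add_mul, sum_add_distrib, mul_assoc,
      ← mul_sum, hx.2, hy.2, mul_zero, add_zero]

lemma convexOn_g {m : ℕ} {s : Set (Fin m → ℝ)} (hs : Convex ℝ s)
    (hs01 : ∀ θ ∈ s, ∀ i, θ i ∈ Set.Icc (0 : ℝ) 1) : ConvexOn ℝ s (g m) := by
  refine ⟨hs, fun x hx y hy a c ha hc hac => ?_⟩
  have hterm := fun i => convexOn_mul_log_add_one_sub_mul_log.2 (hs01 x hx i) (hs01 y hy i)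
    ha hc hac
  simp only [smul_eq_mul] at hterm
  simp only [g, Pi.add_apply, Pi.smul_apply, smul_eq_mul]
  calc _ ≤ 1 / (m : ℝ) * ∑ i, (a * (x i * log (x i) + (1 - x i) * log (1 - x i))
          + c * (y i * log (y i) + (1 - y i) * log (1 - y i))) :=
        mul_le_mul_of_nonneg_left (sum_le_sum fun i _ => hterm i) (by positivity)
    _ = _ := by rw [sum_add_distrib, ← mul_sum, ← mul_sum]; ring

section thetaMax

variable {m : ℕ} {b : Fin m → ℝ}

lemma mPlus_add_mMinus (hb : ∀ i, b i = 1 ∨ b i = -1) :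
    (mPlus m b : ℝ) + mMinus m b = m := by
  have hminus : mMinus m b = #{i | ¬ b i = 1} := by
    unfold mMinus
    congr 1
    refine filter_congr fun i _ => ?_
    rcases hb i with h | h <;> norm_num [h]
  rw [mPlus, hminus]
  exact_mod_cast card_filter_add_card_filter_not (s := univ) (fun i => b i = 1) |>.trans
    (card_fin m)

lemma one_sub_thetaMax (hb : ∀ i, b i = 1 ∨ b i = -1) (i : Fin m) :
    1 - thetaMax m b i = if b i = 1 then (mPlus m b : ℝ) / m else (mMinus m b : ℝ) / m := by
  have hm : (m : ℝ) ≠ 0 := (Nat.cast_pos.2 i.pos).ne'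
  have hsum := mPlus_add_mMinus hb
  unfold thetaMax
  split_ifs <;> field_simp <;> linarith

lemma thetaMax_mem_Ioo (hb : ∀ i, b i = 1 ∨ b i = -1) (hmp : 1 ≤ mPlus m b)
    (hmm : 1 ≤ mMinus m b) (i : Fin m) : 0 < thetaMax m b i ∧ thetaMax m b i < 1 := by
  have hm : (0 : ℝ) < m := Nat.cast_pos.2 i.pos
  have hp : (0 : ℝ) < mPlus m b := by exact_mod_cast hmp
  have hn : (0 : ℝ) < mMinus m b := by exact_mod_cast hmm
  have h := one_sub_thetaMax hb i
  unfold thetaMax at h ⊢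
  split_ifs at h ⊢
  · exact ⟨div_pos hn hm, by linarith [div_pos hp hm]⟩
  · exact ⟨div_pos hp hm, by linarith [div_pos hn hm]⟩

lemma log_thetaMax_sub_log_one_sub (hb : ∀ i, b i = 1 ∨ b i = -1) (i : Fin m) :
    log (thetaMax m b i) - log (1 - thetaMax m b i)
      = (log (mMinus m b / m) - log (mPlus m b / m)) * b i := by
  rw [one_sub_thetaMax hb i, thetaMax]
  rcases hb i with h | h <;> norm_num [h]

lemma sum_thetaMax_mul_eq_zero (hb : ∀ i, b i = 1 ∨ b i = -1) :
    ∑ i, thetaMax m b i * b i = 0 := by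
  have hterm : ∀ i, thetaMax m b i * b i = (if b i = 1 then (mMinus m b : ℝ) / m else 0)
      - (if b i = -1 then (mPlus m b : ℝ) / m else 0) := by
    intro i
    rcases hb i with h | h <;> norm_num [thetaMax, h]
  simp only [hterm, sum_sub_distrib, sum_ite, sum_const, nsmul_eq_mul]
  unfold mPlus mMinus
  ring

lemma thetaMax_mem_relaxedFeas (hb : ∀ i, b i = 1 ∨ b i = -1) (hmp : 1 ≤ mPlus m b)
    (hmm : 1 ≤ mMinus m b) : thetaMax m b ∈ relaxedFeas m b :=
  ⟨thetaMax_mem_Ioo hb hmp hmm, sum_thetaMax_mul_eq_zero hb⟩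

/-- The tangent plane of `g` at `θ_max` is constant on the hyperplane `⟨θ, b⟩ = 0`, since
the gradient of `g` at `θ_max` is a multiple of `b`. -/
lemma sum_tangent_thetaMax (hb : ∀ i, b i = 1 ∨ b i = -1)
    {θ : Fin m → ℝ} (hθ : ∑ i, θ i * b i = 0) :
    ∑ i, (θ i * log (thetaMax m b i) + (1 - θ i) * log (1 - thetaMax m b i))
      = ∑ i, log (1 - thetaMax m b i) := by
  have hterm : ∀ i, θ i * log (thetaMax m b i) + (1 - θ i) * log (1 - thetaMax m b i)
      = log (1 - thetaMax m b i)
        + (log (mMinus m b / m) - log (mPlus m b / m)) * (θ i * b i) := by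
    intro i
    rw [mul_left_comm, ← log_thetaMax_sub_log_one_sub hb]
    ring
  simp only [hterm, sum_add_distrib, ← mul_sum, hθ, mul_zero, add_zero]

lemma g_thetaMax_lt (hb : ∀ i, b i = 1 ∨ b i = -1) (hmp : 1 ≤ mPlus m b)
    (hmm : 1 ≤ mMinus m b) {θ : Fin m → ℝ} (hθ : θ ∈ relaxedFeas m b)
    (hne : θ ≠ thetaMax m b) : g m (thetaMax m b) < g m θ := by
  have hθmax : thetaMax m b ∈ relaxedFeas m b := thetaMax_mem_relaxedFeas hb hmp hmm
  obtain ⟨i₀, hi₀⟩ := Function.ne_iff.1 hne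
  have hm : (0 : ℝ) < m := Nat.cast_pos.2 i₀.pos
  have hgibbs := sum_lt_sum
    (fun i _ => mul_log_add_one_sub_mul_log_le (hθmax.1 i).1 (hθmax.1 i).2 (hθ.1 i).1 (hθ.1 i).2)
    ⟨i₀, mem_univ _, mul_log_add_one_sub_mul_log_lt (hθmax.1 i₀).1 (hθmax.1 i₀).2 (hθ.1 i₀).1
      (hθ.1 i₀).2 (Ne.symm hi₀)⟩
  rw [sum_tangent_thetaMax hb hθ.2, ← sum_tangent_thetaMax hb hθmax.2] at hgibbs
  exact mul_lt_mul_of_pos_left hgibbs (by positivity)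

end thetaMax

lemma exists_mul_lamMax_eq {m p : ℕ} (hm : m ≠ 0) (hp : 1 ≤ p) (X : Fin p → Fin m → ℝ)
    (b : Fin m → ℝ) : ∃ j, (m : ℝ) * lamMax m p X b = |∑ i, thetaMax m b i * X j i| := by
  have : Nonempty (Fin p) := ⟨⟨0, hp⟩⟩
  obtain ⟨j, hj⟩ := exists_eq_ciSup_of_finite (f := fun j => |∑ i, thetaMax m b i * X j i|)
  refine ⟨j, ?_⟩
  rw [lamMax, hj]
  field_simp

theorem slores_active_set_nonempty_general (m p : ℕ) (hm : 1 ≤ m) (hp : 1 ≤ p)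
    (X : Fin p → Fin m → ℝ) (b : Fin m → ℝ) (hb : ∀ i, b i = 1 ∨ b i = -1)
    (hmp : 1 ≤ mPlus m b) (hmm : 1 ≤ mMinus m b)
    (lam : ℝ) (hle : lam ≤ lamMax m p X b)
    (θs : Fin m → ℝ)
    (hθs : θs ∈ Feas m p X b lam ∧ ∀ θ ∈ Feas m p X b lam, g m θs ≤ g m θ) :
    ∃ j : Fin p, |∑ i, θs i * X j i| = (m : ℝ) * lam := by
  obtain ⟨⟨hbox, hcol, hbal⟩, hmin⟩ := hθs
  by_contra! hinactive
  have hstrict : ∀ j, |∑ i, θs i * X j i| < m * lam := fun j => (hcol j).lt_of_ne (hinactive j)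
  have hlocal : IsLocalMinOn (g m) (relaxedFeas m b) θs := by
    have hnear : ∀ᶠ θ in 𝓝 θs, ∀ j, |∑ i, θ i * X j i| < m * lam :=
      eventually_all.2 fun j => (by fun_prop : Continuous fun θ : Fin m → ℝ =>
        |∑ i, θ i * X j i|).continuousAt.eventually_lt continuousAt_const (hstrict j)
    filter_upwards [self_mem_nhdsWithin, nhdsWithin_le_nhds hnear] with θ hθ hθcol
    exact hmin θ ⟨hθ.1, fun j => (hθcol j).le, hθ.2⟩
  have hθs : θs ∈ relaxedFeas m b := ⟨hbox, hbal⟩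
  have hglobal := IsMinOn.of_isLocalMinOn_of_convexOn hθs hlocal
    (convexOn_g (convex_relaxedFeas m b) fun θ hθ i => ⟨(hθ.1 i).1.le, (hθ.1 i).2.le⟩)
  have hθmax : θs = thetaMax m b := by
    by_contra hne
    exact (g_thetaMax_lt hb hmp hmm hθs hne).not_ge
      (hglobal (thetaMax_mem_relaxedFeas hb hmp hmm))
  obtain ⟨j, hj⟩ := exists_mul_lamMax_eq (by omega) hp X b
  rw [← hθmax] at hj
  exact (hstrict j).not_ge (hj ▸ mul_le_mul_of_nonneg_left hle m.cast_nonneg)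

/-- Lemma 3: for every `λ ∈ (0, λ_max]`, the active set
`I_λ = {j : |⟨θ*_λ, x̄^j⟩| = mλ}` is nonempty. -/
theorem slores_active_set_nonempty (m p : ℕ) (hm : 1 ≤ m) (hp : 1 ≤ p)
    (X : Fin p → Fin m → ℝ) (b : Fin m → ℝ) (hb : ∀ i, b i = 1 ∨ b i = -1)
    (hmp : 1 ≤ mPlus m b) (hmm : 1 ≤ mMinus m b) (hlmax : 0 < lamMax m p X b)
    (lam : ℝ) (hlam : 0 < lam) (hle : lam ≤ lamMax m p X b)
    (θs : Fin m → ℝ)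
    (hθs : θs ∈ Feas m p X b lam ∧ ∀ θ ∈ Feas m p X b lam, g m θs ≤ g m θ) :
    ∃ j : Fin p, |∑ i, θs i * X j i| = (m : ℝ) * lam :=
  slores_active_set_nonempty_general m p hm hp X b hb hmp hmm lam hle θs hθs
end

section
/- Let λ_max ≥ λ₀ > λ > 0, let j ∈ {1,…,p} with Px̄^j ≠ 0, let ξ ∈ {+1, −1}, and set x̄ = −ξ·x̄^j. If ⟨Px̄, Px̄*⟩/(‖Px̄‖₂·‖Px̄*‖₂) = −1, then min_{θ ∈ A} ⟨θ, x̄⟩ = max{ sup_{u₁ > 0, u₂ ≥ 0} ḡ(u₁, u₂), −(‖Px̄‖₂/‖Px̄*‖₂)·mλ }, where ḡ(u₁, u₂) = −(1/(2u₁))·‖Px̄ + u₂·Px̄*‖₂² + u₂·m(λ₀ − λ) + ⟨θ₀, x̄⟩ − (1/2)·u₁·r². -/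
/-- `P`, the orthogonal projection onto the orthogonal complement of `b`:
`Pv = v − (⟨v,b⟩/‖b‖₂²) b`. -/
noncomputable def Pb (m : ℕ) (b : Fin m → ℝ) (v : Fin m → ℝ) : Fin m → ℝ :=
  fun i => v i - ((∑ k, v k * b k) / (∑ k, (b k) ^ 2)) * b i

/-! On the hyperplane `⟨θ, b⟩ = 0` one has `⟨θ, x⟩ = ⟨θ, Px⟩`, and the cosine hypothesis forces
`Px̄ = -c • Px̄*` with `c = ‖Px̄‖ / ‖Px̄*‖`; hence `⟨θ, x̄⟩ = -c ⟨θ, x̄*⟩ ≥ -c mλ` on `A`.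
The bound is attained at `(λ/λ₀) θ₀`, which lies in `A` because `r²` is `m/2` times the Bregman
divergence of `g`, a sum of Bernoulli Kullback–Leibler divergences, and Pinsker's inequality
bounds it below by `‖(λ/λ₀) θ₀ - θ₀‖²`. Finally every dual value `ḡ(u₁, u₂)` is at most
`-c mλ`: with `a = u₂ - c` this reduces to `a m(λ₀ - λ) ≤ a² ‖Px̄*‖² / (2u₁) + u₁ r² / 2`, which is
AM–GM combined with `m(λ₀ - λ) = ⟨θ₀ - (λ/λ₀) θ₀, Px̄*⟩ ≤ r ‖Px̄*‖`. -/

open Real Finset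

lemma Real.sign_mul_self_eq_abs (s : ℝ) : Real.sign s * s = |s| := by
  rcases lt_trichotomy s 0 with h | rfl | h
  · simp [sign_of_neg h, abs_of_neg h]
  · simp
  · simp [sign_of_pos h, abs_of_pos h]

lemma sum_mul_sign_mul_eq_abs {ι : Type*} [Fintype ι] (θ x : ι → ℝ) :
    ∑ i, θ i * (Real.sign (∑ k, θ k * x k) * x i) = |∑ i, θ i * x i| := by
  rw [← Real.sign_mul_self_eq_abs, mul_sum]
  exact sum_congr rfl fun i _ => by ring

lemma abs_sum_mul_le_sqrt_mul_sqrt {ι : Type*} (s : Finset ι) (f g : ι → ℝ) :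
    |∑ i ∈ s, f i * g i| ≤ √(∑ i ∈ s, f i ^ 2) * √(∑ i ∈ s, g i ^ 2) := by
  refine abs_le.2 ⟨?_, sum_mul_le_sqrt_mul_sqrt s f g⟩
  have := sum_mul_le_sqrt_mul_sqrt s (fun i => -f i) g
  simp only [neg_mul, sum_neg_distrib, neg_sq] at this
  linarith

lemma eq_neg_div_mul_of_cos_eq_neg_one {ι : Type*} [Fintype ι] {u v : ι → ℝ}
    (h : (∑ i, u i * v i) / (√(∑ i, u i ^ 2) * √(∑ i, v i ^ 2)) = -1) (i : ι) :
    u i = -(√(∑ i, u i ^ 2) / √(∑ i, v i ^ 2)) * v i := by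
  set su := √(∑ i, u i ^ 2)
  set sv := √(∑ i, v i ^ 2)
  have hden : su * sv ≠ 0 := by
    intro h0
    rw [h0, div_zero] at h
    norm_num at h
  have huv : ∑ i, u i * v i = -(su * sv) := by
    rw [div_eq_iff hden] at h
    linarith
  have hsu2 : su ^ 2 = ∑ i, u i ^ 2 := sq_sqrt (sum_nonneg fun _ _ => sq_nonneg _)
  have hsv2 : sv ^ 2 = ∑ i, v i ^ 2 := sq_sqrt (sum_nonneg fun _ _ => sq_nonneg _)
  -- the equality case of Cauchy–Schwarz
  have hzero : ∑ j, (sv * u j + su * v j) ^ 2 = 0 := by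
    calc ∑ j, (sv * u j + su * v j) ^ 2
        = sv ^ 2 * ∑ j, u j ^ 2 + 2 * su * sv * ∑ j, u j * v j + su ^ 2 * ∑ j, v j ^ 2 := by
          simp only [mul_sum, ← sum_add_distrib]
          exact sum_congr rfl fun j _ => by ring
      _ = 0 := by rw [← hsu2, ← hsv2, huv]; ring
  have hi := pow_eq_zero_iff two_ne_zero |>.1 <|
    (sum_eq_zero_iff_of_nonneg fun j _ => sq_nonneg _).1 hzero i (mem_univ i)
  field_simp [(mul_ne_zero_iff.1 hden).2]
  linarith

lemma neg_div_sum_sq_add_mul_le {ι : Type*} [Fintype ι] {u v : ι → ℝ} {c : ℝ}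
    (huv : ∀ i, u i = -c * v i) {u₁ δ r : ℝ} (hu₁ : 0 < u₁) (hδ : |δ| ≤ r * √(∑ i, v i ^ 2))
    (u₂ : ℝ) :
    -(1 / (2 * u₁)) * ∑ i, (u i + u₂ * v i) ^ 2 + (u₂ - c) * δ - 1 / 2 * u₁ * r ^ 2 ≤ 0 := by
  set s := √(∑ i, v i ^ 2)
  set a := u₂ - c
  have hsq : ∑ i, (u i + u₂ * v i) ^ 2 = a ^ 2 * s ^ 2 := by
    rw [sq_sqrt (sum_nonneg fun _ _ => sq_nonneg _), mul_sum]
    exact sum_congr rfl fun i _ => by rw [huv]; ring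
  have hCS : a * δ ≤ |a| * (r * s) := by
    calc a * δ ≤ |a| * |δ| := by rw [← abs_mul]; exact le_abs_self _
      _ ≤ |a| * (r * s) := by gcongr
  have hAMGM : 2 * u₁ * (|a| * (r * s)) ≤ a ^ 2 * s ^ 2 + u₁ ^ 2 * r ^ 2 := by
    nlinarith [sq_nonneg (|a| * s - u₁ * r), sq_abs a]
  rw [hsq, show -(1 / (2 * u₁)) * (a ^ 2 * s ^ 2) + a * δ - 1 / 2 * u₁ * r ^ 2
      = -((a ^ 2 * s ^ 2 + u₁ ^ 2 * r ^ 2 - 2 * u₁ * (a * δ)) / (2 * u₁)) by field_simp; ring]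
  exact neg_nonpos.2 (div_nonneg (by nlinarith) (by positivity))

lemma two_mul_sub_sq_le_bernoulli_kl {x y : ℝ} (hy : 0 < y) (hyx : y ≤ x) (hx : x < 1) :
    2 * (x - y) ^ 2 ≤
      y * log y + (1 - y) * log (1 - y) - (y * log x + (1 - y) * log (1 - x)) := by
  let f : ℝ → ℝ := fun z => y * log z + (1 - y) * log (1 - z) + 2 * (z - y) ^ 2
  have hf : ∀ z ∈ Set.Ioo 0 1, HasDerivAt f ((z - y) * (4 - 1 / (z * (1 - z)))) z := by
    rintro z ⟨hz0, hz1⟩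
    have h1z : 1 - z ≠ 0 := sub_ne_zero.2 hz1.ne'
    have := (((hasDerivAt_log hz0.ne').const_mul y).add
      (((hasDerivAt_log h1z).comp z ((hasDerivAt_id z).const_sub 1)).const_mul (1 - y))).add
      ((((hasDerivAt_id z).sub_const y).pow 2).const_mul 2)
    refine this.congr_deriv ?_
    simp only [id]
    field_simp
    ring
  have hsub : Set.Icc y x ⊆ Set.Ioo 0 1 := Set.Icc_subset_Ioo hy hx
  have hanti : AntitoneOn f (Set.Icc y x) := by
    refine antitoneOn_of_hasDerivWithinAt_nonpos (convex_Icc y x)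
      (fun z hz => (hf z (hsub hz)).continuousAt.continuousWithinAt)
      (fun z hz => (hf z (hsub (interior_subset hz))).hasDerivWithinAt) ?_
    rintro z hz
    rw [interior_Icc] at hz
    obtain ⟨hz0, hz1⟩ := hsub (Set.Ioo_subset_Icc_self hz)
    have h4 : 4 ≤ 1 / (z * (1 - z)) := by
      rw [le_div_iff₀ (by nlinarith)]
      nlinarith [sq_nonneg (2 * z - 1)]
    exact mul_nonpos_of_nonneg_of_nonpos (by linarith [hz.1]) (by linarith)
  have := hanti ⟨le_rfl, hyx⟩ ⟨hyx, le_rfl⟩ hyx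
  simp only [f, sub_self] at this
  linarith

lemma sum_sq_sub_le_g_bregman {m : ℕ} {θ η : Fin m → ℝ} (hη : ∀ i, 0 < η i ∧ η i ≤ θ i)
    (hθ : ∀ i, θ i < 1) :
    ∑ i, (η i - θ i) ^ 2 ≤ (m / 2) * (g m η - g m θ - ∑ i, gradg m θ i * (η i - θ i)) := by
  rcases m.eq_zero_or_pos with rfl | hm
  · simp
  have key : ∀ i, 2 * (η i - θ i) ^ 2 ≤
      (η i * log (η i) + (1 - η i) * log (1 - η i))
        - (θ i * log (θ i) + (1 - θ i) * log (1 - θ i))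
        - log (θ i / (1 - θ i)) * (η i - θ i) := by
    intro i
    obtain ⟨hη0, hηθ⟩ := hη i
    rw [log_div (hη0.trans_le hηθ).ne' (sub_ne_zero.2 (hθ i).ne')]
    linear_combination two_mul_sub_sq_le_bernoulli_kl hη0 hηθ (hθ i)
  calc ∑ i, (η i - θ i) ^ 2 = (1 / 2) * ∑ i, 2 * (η i - θ i) ^ 2 := by
        rw [← mul_sum]; ring
    _ ≤ (1 / 2) * ∑ i, ((η i * log (η i) + (1 - η i) * log (1 - η i))
        - (θ i * log (θ i) + (1 - θ i) * log (1 - θ i))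
        - log (θ i / (1 - θ i)) * (η i - θ i)) := by gcongr with i; exact key i
    _ = (m / 2) * (g m η - g m θ - ∑ i, gradg m θ i * (η i - θ i)) := by
        simp only [g, gradg, sum_sub_distrib, mul_assoc, ← mul_sum]
        field_simp

lemma sum_sq_mul_sub_le_sqrt_sq {m : ℕ} {θ : Fin m → ℝ} (hθ : ∀ i, 0 < θ i ∧ θ i < 1)
    {t : ℝ} (ht0 : 0 < t) (ht1 : t ≤ 1) :
    ∑ i, (t * θ i - θ i) ^ 2 ≤ √((m / 2) * (g m (fun i => t * θ i) - g m θ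
      + (1 - t) * ∑ i, gradg m θ i * θ i)) ^ 2 := by
  have h := sum_sq_sub_le_g_bregman (η := fun i => t * θ i)
    (fun i => ⟨mul_pos ht0 (hθ i).1, mul_le_of_le_one_left (hθ i).1.le ht1⟩) (fun i => (hθ i).2)
  have hlin : ∑ i, gradg m θ i * (t * θ i - θ i) = -((1 - t) * ∑ i, gradg m θ i * θ i) := by
    rw [mul_sum, ← sum_neg_distrib]
    exact sum_congr rfl fun i _ => by ring
  rw [hlin, sub_neg_eq_add] at h
  rwa [sq_sqrt ((sum_nonneg fun i _ => sq_nonneg _).trans h)]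

lemma sum_mul_Pb_of_sum_mul_eq_zero {m : ℕ} {b z : Fin m → ℝ} (hz : ∑ i, z i * b i = 0)
    (v : Fin m → ℝ) : ∑ i, z i * Pb m b v i = ∑ i, z i * v i := by
  simp only [Pb, mul_sub, sum_sub_distrib, mul_left_comm (z _), ← mul_sum, hz, mul_zero,
    sub_zero]

lemma abs_sum_mul_sub_sum_mul_le {m : ℕ} {b θ θ' : Fin m → ℝ} (hθ : ∑ i, θ i * b i = 0)
    (hθ' : ∑ i, θ' i * b i = 0) {r : ℝ} (hr0 : 0 ≤ r) (hr : ∑ i, (θ i - θ' i) ^ 2 ≤ r ^ 2)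
    (x : Fin m → ℝ) :
    |∑ i, θ i * x i - ∑ i, θ' i * x i| ≤ r * √(∑ i, Pb m b x i ^ 2) := by
  have hd : ∑ i, (θ i - θ' i) * b i = 0 := by
    simp only [sub_mul, sum_sub_distrib, hθ, hθ', sub_zero]
  calc |∑ i, θ i * x i - ∑ i, θ' i * x i| = |∑ i, (θ i - θ' i) * Pb m b x i| := by
        rw [sum_mul_Pb_of_sum_mul_eq_zero hd]
        simp only [sub_mul, sum_sub_distrib]
    _ ≤ √(∑ i, (θ i - θ' i) ^ 2) * √(∑ i, Pb m b x i ^ 2) := abs_sum_mul_le_sqrt_mul_sqrt _ _ _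
    _ ≤ r * √(∑ i, Pb m b x i ^ 2) := by gcongr; exact (sqrt_le_left hr0).2 hr

lemma sum_mul_eq_neg_mul_of_Pb_eq {m : ℕ} {b z x y : Fin m → ℝ} {c : ℝ}
    (hz : ∑ i, z i * b i = 0) (hxy : ∀ i, Pb m b x i = -c * Pb m b y i) :
    ∑ i, z i * x i = -c * ∑ i, z i * y i := by
  rw [← sum_mul_Pb_of_sum_mul_eq_zero hz x, ← sum_mul_Pb_of_sum_mul_eq_zero hz y, mul_sum]
  exact sum_congr rfl fun i _ => by rw [hxy]; ring

theorem slores_dual_ubp_collinear_general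
 (m p : ℕ)
    (X : Fin p → Fin m → ℝ) (b : Fin m → ℝ)
    (lam lam₀ : ℝ) (hlam : 0 < lam) (hll : lam < lam₀)
    (θ₀ : Fin m → ℝ)
    (hθ₀ : θ₀ ∈ Feas m p X b lam₀ ∧ ∀ θ ∈ Feas m p X b lam₀, g m θ₀ ≤ g m θ)
    (r : ℝ)
    (hr : r = Real.sqrt (((m : ℝ) / 2) * (g m (fun i => (lam / lam₀) * θ₀ i) - g m θ₀
      + (1 - lam / lam₀) * ∑ i, gradg m θ₀ i * θ₀ i)))
    (j₀ : Fin p) (hj₀ : |∑ i, θ₀ i * X j₀ i| = (m : ℝ) * lam₀)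
    (xstar : Fin m → ℝ)
    (hxstar : xstar = fun i => Real.sign (∑ k, θ₀ k * X j₀ k) * X j₀ i)
    (A : Set (Fin m → ℝ))
    (hA : A = {θ | ∑ i, (θ i - θ₀ i) ^ 2 ≤ r ^ 2 ∧ ∑ i, θ i * b i = 0 ∧
      ∑ i, θ i * xstar i ≤ (m : ℝ) * lam})
    (xbar : Fin m → ℝ)
    (gbar : ℝ → ℝ → ℝ)
    (hgbar : gbar = fun u₁ u₂ =>
      -(1 / (2 * u₁)) * ∑ i, (Pb m b xbar i + u₂ * Pb m b xstar i) ^ 2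
        + u₂ * ((m : ℝ) * (lam₀ - lam)) + (∑ i, θ₀ i * xbar i) - (1 / 2) * u₁ * r ^ 2)
    (hcos : (∑ i, Pb m b xbar i * Pb m b xstar i) /
        (Real.sqrt (∑ i, (Pb m b xbar i) ^ 2) * Real.sqrt (∑ i, (Pb m b xstar i) ^ 2)) = -1) :
    IsLeast ((fun θ => ∑ i, θ i * xbar i) '' A)
      (max (sSup {y : ℝ | ∃ u₁ u₂ : ℝ, 0 < u₁ ∧ 0 ≤ u₂ ∧ y = gbar u₁ u₂})
        (-(Real.sqrt (∑ i, (Pb m b xbar i) ^ 2) / Real.sqrt (∑ i, (Pb m b xstar i) ^ 2))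
          * ((m : ℝ) * lam))) := by
  obtain ⟨⟨hθ₀01, -, hθ₀b⟩, -⟩ := hθ₀
  subst hA
  have hlam₀ : 0 < lam₀ := hlam.trans hll
  set c := √(∑ i, Pb m b xbar i ^ 2) / √(∑ i, Pb m b xstar i ^ 2)
  have hcol := eq_neg_div_mul_of_cos_eq_neg_one hcos
  have hθ₀star : ∑ i, θ₀ i * xstar i = m * lam₀ := by rw [hxstar, sum_mul_sign_mul_eq_abs, hj₀]
  have htθ₀b : ∑ i, lam / lam₀ * θ₀ i * b i = 0 := by
    simp only [mul_assoc, ← mul_sum, hθ₀b, mul_zero]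
  have htθ₀star : ∑ i, lam / lam₀ * θ₀ i * xstar i = m * lam := by
    simp only [mul_assoc, ← mul_sum, hθ₀star]
    field_simp
  have hball : ∑ i, (lam / lam₀ * θ₀ i - θ₀ i) ^ 2 ≤ r ^ 2 :=
    hr ▸ sum_sq_mul_sub_le_sqrt_sq hθ₀01 (div_pos hlam hlam₀) (div_le_one_of_le₀ hll.le hlam₀.le)
  have hδ : |m * (lam₀ - lam)| ≤ r * √(∑ i, Pb m b xstar i ^ 2) := by
    have := abs_sum_mul_sub_sum_mul_le htθ₀b hθ₀b (hr ▸ sqrt_nonneg _) hball xstar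
    rwa [htθ₀star, hθ₀star, abs_sub_comm, ← mul_sub] at this
  have hsup : sSup {y : ℝ | ∃ u₁ u₂ : ℝ, 0 < u₁ ∧ 0 ≤ u₂ ∧ y = gbar u₁ u₂} ≤ -c * (m * lam) := by
    refine csSup_le ⟨_, 1, 0, one_pos, le_rfl, rfl⟩ ?_
    rintro _ ⟨u₁, u₂, hu₁, -, rfl⟩
    have := neg_div_sum_sq_add_mul_le hcol hu₁ hδ u₂
    rw [hgbar, sum_mul_eq_neg_mul_of_Pb_eq hθ₀b hcol, hθ₀star]
    linarith
  rw [max_eq_right hsup]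
  refine ⟨⟨_, ⟨hball, htθ₀b, htθ₀star.le⟩, ?_⟩, ?_⟩
  · dsimp only
    rw [sum_mul_eq_neg_mul_of_Pb_eq htθ₀b hcol, htθ₀star]
  · rintro _ ⟨θ, ⟨-, hθb, hθstar⟩, rfl⟩
    dsimp only
    rw [sum_mul_eq_neg_mul_of_Pb_eq hθb hcol]
    exact mul_le_mul_of_nonpos_left hθstar (neg_nonpos.2 (by positivity))

/-- Lemma 7(b): if `⟨Px̄, Px̄*⟩/(‖Px̄‖₂‖Px̄*‖₂) = −1`, then
`min_{θ ∈ A} ⟨θ, x̄⟩ = max{ sup_{u₁ > 0, u₂ ≥ 0} ḡ(u₁, u₂), −(‖Px̄‖₂/‖Px̄*‖₂)mλ }`. -/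
theorem slores_dual_ubp_collinear
 (m p : ℕ) (hm : 1 ≤ m) (hp : 1 ≤ p)
    (X : Fin p → Fin m → ℝ) (b : Fin m → ℝ) (hb : ∀ i, b i = 1 ∨ b i = -1)
    (hmp : 1 ≤ mPlus m b) (hmm : 1 ≤ mMinus m b) (hlmax : 0 < lamMax m p X b)
    (lam lam₀ : ℝ) (hlam : 0 < lam) (hll : lam < lam₀) (hle : lam₀ ≤ lamMax m p X b)
    (θ₀ : Fin m → ℝ)
    (hθ₀ : θ₀ ∈ Feas m p X b lam₀ ∧ ∀ θ ∈ Feas m p X b lam₀, g m θ₀ ≤ g m θ)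
    (r : ℝ)
    (hr : r = Real.sqrt (((m : ℝ) / 2) * (g m (fun i => (lam / lam₀) * θ₀ i) - g m θ₀
      + (1 - lam / lam₀) * ∑ i, gradg m θ₀ i * θ₀ i)))
    (j₀ : Fin p) (hj₀ : |∑ i, θ₀ i * X j₀ i| = (m : ℝ) * lam₀)
    (xstar : Fin m → ℝ)
    (hxstar : xstar = fun i => Real.sign (∑ k, θ₀ k * X j₀ k) * X j₀ i)
    (A : Set (Fin m → ℝ))
    (hA : A = {θ | ∑ i, (θ i - θ₀ i) ^ 2 ≤ r ^ 2 ∧ ∑ i, θ i * b i = 0 ∧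
      ∑ i, θ i * xstar i ≤ (m : ℝ) * lam})
    (hPxs : Pb m b xstar ≠ 0)
    (j : Fin p) (hPj : Pb m b (X j) ≠ 0)
    (ξ : ℝ) (hξ : ξ = 1 ∨ ξ = -1)
    (xbar : Fin m → ℝ) (hxbar : xbar = fun i => -ξ * X j i)
    (gbar : ℝ → ℝ → ℝ)
    (hgbar : gbar = fun u₁ u₂ =>
      -(1 / (2 * u₁)) * ∑ i, (Pb m b xbar i + u₂ * Pb m b xstar i) ^ 2
        + u₂ * ((m : ℝ) * (lam₀ - lam)) + (∑ i, θ₀ i * xbar i) - (1 / 2) * u₁ * r ^ 2)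
    (hcos : (∑ i, Pb m b xbar i * Pb m b xstar i) /
        (Real.sqrt (∑ i, (Pb m b xbar i) ^ 2) * Real.sqrt (∑ i, (Pb m b xstar i) ^ 2)) = -1) :
    IsLeast ((fun θ => ∑ i, θ i * xbar i) '' A)
      (max (sSup {y : ℝ | ∃ u₁ u₂ : ℝ, 0 < u₁ ∧ 0 ≤ u₂ ∧ y = gbar u₁ u₂})
        (-(Real.sqrt (∑ i, (Pb m b xbar i) ^ 2) / Real.sqrt (∑ i, (Pb m b xstar i) ^ 2))
          * ((m : ℝ) * lam))) :=
  slores_dual_ubp_collinear_general m p X b lam lam₀ hlam hll θ₀ hθ₀ r hr j₀ hj₀ xstar hxstar A hA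
    xbar gbar hgbar hcos
end
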